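/- Let H and A be linearly ordered abelian groups, (K,v) a field with additive valuation with value group A and cross-section σ : A → Kˣ, β : H × H → A a normalized symmetric 2-cocycle, ψ : H → A a map with ψ(0) = 0, and β'(h,h') = β(h,h') − (ψ(h+h') − ψ(h) − ψ(h')). Then the map Φ : HahnSeries H K → HahnSeries H K defined by (Φ a).coeff(h) = (a.coeff h)·σ(ψ(h)) is a bijection that is additive and satisfies Φ(a ⋆_β b) = Φ(a) ⋆_{β'} Φ(b), where ⋆_β and ⋆_{β'} are the twisted multiplications determined by β and β'; moreover for nonzero a, val_{β'}(Φ a) = g(val_β(a)), where g(z,h) = (z + ψ(h), h) and val_β, val_{β'} are the valuations val(f) = (v(f.coeff h₀), h₀), h₀ = min supp(f). Hence K(t^H,β) and K(t^H,β') are isomorphic as valued fields. -/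

import Mathlib

/-!
Rescaling the `h`-th coefficient by the unit `σ (ψ h)` preserves supports, so it is additive,
invertible (with inverse the rescaling by `σ (-ψ h)`) and keeps the leading exponent, whose
coefficient gains the valuation `v (σ (ψ h)) = ψ h`. On a product term `a_h b_h'` with
`h + h' = l` the two sides differ by the factor `σ (-β h h' + ψ l)` versus
`σ (ψ h + ψ h' - β' h h')`, and these arguments agree by the definition of `β'`.
-/

/-- Twisted multiplication on Hahn series. -/
noncomputable def tmul {K H A : Type*} [Field K]
    [AddCommGroup H] [LinearOrder H] [IsOrderedAddMonoid H] [AddCommGroup A]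
    (σ : A → Kˣ) (β : H → H → A) (x y : HahnSeries H K) : HahnSeries H K where
  coeff l := ∑ ij ∈ Finset.addAntidiagonal x.isPWO_support y.isPWO_support l,
      x.coeff ij.1 * y.coeff ij.2 * (σ (-β ij.1 ij.2) : K)
  isPWO_support' := by
    refine Set.IsPWO.mono (x.isPWO_support.add y.isPWO_support) ?_
    intro l hl
    obtain ⟨ij, hij, -⟩ :=
      Finset.exists_ne_zero_of_sum_ne_zero (Function.mem_support.mp hl)
    replace hij := Finset.mem_antidiagonal.mp hij
    exact Set.mem_add.mpr ⟨ij.1, hij.1, ij.2, hij.2.1, hij.2.2⟩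

/-- The map `Φ` rescaling the `h`-th coefficient by `σ (ψ h)`. -/
noncomputable def tscale {K H A : Type*} [Field K]
    [AddCommGroup H] [LinearOrder H] [IsOrderedAddMonoid H] [AddCommGroup A]
    (σ : A → Kˣ) (ψ : H → A) (a : HahnSeries H K) : HahnSeries H K where
  coeff h := a.coeff h * (σ (ψ h) : K)
  isPWO_support' := by
    refine Set.IsPWO.mono a.isPWO_support ?_
    intro h hh
    refine Function.mem_support.mpr fun h0 => Function.mem_support.mp hh ?_
    rw [h0, zero_mul]

/-- The minimum of the support of a nonzero Hahn series. -/
noncomputable def minSupp {K H : Type*} [Field K] [AddCommGroup H] [LinearOrder H] [IsOrderedAddMonoid H]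
    (f : HahnSeries H K) (hf : f ≠ 0) : H :=
  f.isWF_support.min (HahnSeries.support_nonempty_iff.mpr hf)

/-- The valuation `val f = (v (f.coeff h₀), h₀)`, `h₀ = min supp f`. -/
noncomputable def tval {K H A : Type*} [Field K] [AddCommGroup H] [LinearOrder H] [IsOrderedAddMonoid H]
    [AddCommGroup A] [LinearOrder A] [IsOrderedAddMonoid A]
    (v : K → WithTop A) (f : HahnSeries H K) (hf : f ≠ 0) : WithTop A × H :=
  (v (f.coeff (minSupp f hf)), minSupp f hf)

theorem map_zero_eq_one_of_map_add {A G : Type*} [AddMonoid A] [LeftCancelMonoid G] {σ : A → G}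
    (hσ : ∀ a a' : A, σ (a + a') = σ a * σ a') : σ 0 = 1 := by
  simpa using hσ 0 0

theorem Set.IsWF.min_congr {α : Type*} [LinearOrder α] {s t : Set α} (hs : s.IsWF) (ht : t.IsWF)
    (hsn : s.Nonempty) (htn : t.Nonempty) (hst : s = t) : hs.min hsn = ht.min htn := by
  subst hst
  rfl

section TwistedHahnSeries

variable {K H A : Type*} [Field K] [AddCommGroup H] [LinearOrder H] [IsOrderedAddMonoid H]
  [AddCommGroup A] {σ : A → Kˣ}

@[simp]
theorem coeff_tscale (ψ : H → A) (a : HahnSeries H K) (h : H) :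
    (tscale σ ψ a).coeff h = a.coeff h * (σ (ψ h) : K) :=
  rfl

@[simp]
theorem support_tscale (ψ : H → A) (a : HahnSeries H K) :
    (tscale σ ψ a).support = a.support := by
  ext h
  simp [(σ (ψ h)).ne_zero]

theorem tscale_ne_zero_iff {ψ : H → A} {a : HahnSeries H K} : tscale σ ψ a ≠ 0 ↔ a ≠ 0 := by
  rw [← HahnSeries.support_nonempty_iff, ← HahnSeries.support_nonempty_iff, support_tscale]

theorem tscale_add (ψ : H → A) (a b : HahnSeries H K) :
    tscale σ ψ (a + b) = tscale σ ψ a + tscale σ ψ b := by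
  ext h
  simp [add_mul]

theorem tscale_tscale (hσ : ∀ a a' : A, σ (a + a') = σ a * σ a') (ψ φ : H → A)
    (a : HahnSeries H K) : tscale σ φ (tscale σ ψ a) = tscale σ (ψ + φ) a := by
  ext h
  simp [hσ, mul_assoc]

theorem tscale_zero_fun (hσ : ∀ a a' : A, σ (a + a') = σ a * σ a') (a : HahnSeries H K) :
    tscale σ 0 a = a := by
  ext h
  simp [map_zero_eq_one_of_map_add hσ]

theorem tscale_bijective (hσ : ∀ a a' : A, σ (a + a') = σ a * σ a') (ψ : H → A) :
    Function.Bijective (tscale (K := K) σ ψ) := by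
  refine Function.bijective_iff_has_inverse.mpr ⟨tscale σ (-ψ), fun a => ?_, fun a => ?_⟩
  · rw [tscale_tscale hσ, add_neg_cancel, tscale_zero_fun hσ]
  · rw [tscale_tscale hσ, neg_add_cancel, tscale_zero_fun hσ]

theorem tscale_tmul (hσ : ∀ a a' : A, σ (a + a') = σ a * σ a') {ψ : H → A} {β β' : H → H → A}
    (hβ' : ∀ h h' : H, β' h h' = β h h' - (ψ (h + h') - ψ h - ψ h')) (a b : HahnSeries H K) :
    tscale σ ψ (tmul σ β a b) = tmul σ β' (tscale σ ψ a) (tscale σ ψ b) := by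
  ext l
  simp only [coeff_tscale, tmul, Finset.sum_mul]
  refine Finset.sum_congr (by ext; simp) fun ij hij => ?_
  have hl : ij.1 + ij.2 = l := (Finset.mem_antidiagonal.mp hij).2.2
  have hunits : (σ (-β ij.1 ij.2) : K) * σ (ψ l) = σ (ψ ij.1) * σ (ψ ij.2) * σ (-β' ij.1 ij.2) := by
    simp only [← Units.val_mul, ← hσ, hβ', ← hl]
    congr 2
    abel
  linear_combination a.coeff ij.1 * b.coeff ij.2 * hunits

theorem minSupp_tscale (ψ : H → A) {a : HahnSeries H K} (ha : a ≠ 0)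
    (hΦ : tscale σ ψ a ≠ 0) : minSupp (tscale σ ψ a) hΦ = minSupp a ha :=
  Set.IsWF.min_congr _ _ _ _ (support_tscale ψ a)

theorem tval_tscale [LinearOrder A] [IsOrderedAddMonoid A] {v : K → WithTop A}
    (hv_mul : ∀ x y : K, v (x * y) = v x + v y) (hσ_cross : ∀ a : A, v ((σ a : K)) = (a : WithTop A))
    (ψ : H → A) {a : HahnSeries H K} (ha : a ≠ 0) (hΦ : tscale σ ψ a ≠ 0) :
    tval v (tscale σ ψ a) hΦ =
      ((tval v a ha).1 + (ψ ((tval v a ha).2) : WithTop A), (tval v a ha).2) := by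
  simp only [tval, minSupp_tscale ψ ha hΦ, coeff_tscale, hv_mul, hσ_cross]

end TwistedHahnSeries

theorem twisted_hahn_series_cohomologous_iso_general
    {K H A : Type*} [Field K]
    [AddCommGroup H] [LinearOrder H] [IsOrderedAddMonoid H] [AddCommGroup A] [LinearOrder A] [IsOrderedAddMonoid A]
    (v : K → WithTop A)
    (hv_mul : ∀ x y : K, v (x * y) = v x + v y)
    (σ : A → Kˣ) (hσ : ∀ a a' : A, σ (a + a') = σ a * σ a')
    (hσ_cross : ∀ a : A, v ((σ a : K)) = (a : WithTop A))
    (β : H → H → A)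
    (ψ : H → A)
    (β' : H → H → A)
    (hβ' : ∀ h h' : H, β' h h' = β h h' - (ψ (h + h') - ψ h - ψ h')) :
    Function.Bijective (tscale (K := K) σ ψ) ∧
    (∀ a b : HahnSeries H K, tscale σ ψ (a + b) = tscale σ ψ a + tscale σ ψ b) ∧
    (∀ a b : HahnSeries H K,
      tscale σ ψ (tmul σ β a b) = tmul σ β' (tscale σ ψ a) (tscale σ ψ b)) ∧
    (∀ (a : HahnSeries H K) (ha : a ≠ 0),
      ∃ hΦ : tscale σ ψ a ≠ 0,
        tval v (tscale σ ψ a) hΦ =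
          ((tval v a ha).1 + (ψ ((tval v a ha).2) : WithTop A), (tval v a ha).2)) :=
  ⟨tscale_bijective hσ ψ, tscale_add ψ, tscale_tmul hσ hβ',
    fun _ ha => ⟨tscale_ne_zero_iff.mpr ha, tval_tscale hv_mul hσ_cross ψ ha _⟩⟩

/-- With `(K, v)` a valued field with value group `A` and
cross-section `σ`, `β` a normalized symmetric 2-cocycle, `ψ : H → A` with
`ψ 0 = 0` and `β' h h' = β h h' - (ψ (h+h') - ψ h - ψ h')`, the coefficientwise
rescaling `Φ` by `σ (ψ h)` is an additive bijection with
`Φ (a ⋆_β b) = Φ a ⋆_{β'} Φ b`, and for nonzero `a`,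
`val_{β'} (Φ a) = g (val_β a)` where `g (z,h) = (z + ψ h, h)`.
Hence `K(t^H,β) ≅ K(t^H,β')` as valued fields. -/
theorem twisted_hahn_series_cohomologous_iso
    {K H A : Type*} [Field K]
    [AddCommGroup H] [LinearOrder H] [IsOrderedAddMonoid H] [AddCommGroup A] [LinearOrder A] [IsOrderedAddMonoid A]
    (v : K → WithTop A)
    (hv_top : ∀ x : K, v x = ⊤ ↔ x = 0)
    (hv_mul : ∀ x y : K, v (x * y) = v x + v y)
    (hv_add : ∀ x y : K, min (v x) (v y) ≤ v (x + y))
    (hv_surj : ∀ a : A, ∃ x : K, v x = (a : WithTop A))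
    (σ : A → Kˣ) (hσ : ∀ a a' : A, σ (a + a') = σ a * σ a')
    (hσ_cross : ∀ a : A, v ((σ a : K)) = (a : WithTop A))
    (β : H → H → A)
    (hβsymm : ∀ h h' : H, β h h' = β h' h)
    (hβnorm : ∀ h : H, β h 0 = 0 ∧ β 0 h = 0)
    (hβcoc : ∀ h h' h'' : H, β h h' + β (h + h') h'' = β h' h'' + β h (h' + h''))
    (ψ : H → A) (hψ0 : ψ 0 = 0)
    (β' : H → H → A)
    (hβ' : ∀ h h' : H, β' h h' = β h h' - (ψ (h + h') - ψ h - ψ h')) :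
    Function.Bijective (tscale (K := K) σ ψ) ∧
    (∀ a b : HahnSeries H K, tscale σ ψ (a + b) = tscale σ ψ a + tscale σ ψ b) ∧
    (∀ a b : HahnSeries H K,
      tscale σ ψ (tmul σ β a b) = tmul σ β' (tscale σ ψ a) (tscale σ ψ b)) ∧
    (∀ (a : HahnSeries H K) (ha : a ≠ 0),
      ∃ hΦ : tscale σ ψ a ≠ 0,
        tval v (tscale σ ψ a) hΦ =
          ((tval v a ha).1 + (ψ ((tval v a ha).2) : WithTop A), (tval v a ha).2)) :=
  twisted_hahn_series_cohomologous_iso_general v hv_mul σ hσ hσ_cross β ψ β' hβ'
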